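/- arXiv:2305.05009 — 5 statements merged into one kernel-verified Lean document; each statement's English description precedes it below -/
import Mathlib

section
/- The sequence of multipliers (μ_k) defined recursively by μ_{k+1} = μ_k + (γ_k/ρ)(λ_k − μ_k) with γ_k = ρδ_k/(‖λ_k − μ_k‖² + 1) and δ_k = r^k δ_0 for some r ∈ (0,1), δ_0 ∈ (0,1], is bounded: ‖μ_k‖ ≤ ‖μ_0‖ + (1/2)·δ_0/(1−r) for all k. -/
/-!
Each step moves `μ` by `δ_k ‖d‖ / (‖d‖² + 1)` with `d = λ_k - μ_k`, and `t / (t² + 1) ≤ 1/2` by AM-GM,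
so the steps are bounded by the geometric sequence `r^k δ_0 / 2`; summing it bounds the drift from `μ_0`.
-/

open RealInnerProductSpace

theorem div_sq_add_one_le_half (t : ℝ) : t / (t ^ 2 + 1) ≤ 1 / 2 := by
  rw [div_le_div_iff₀ (by positivity) two_pos]
  nlinarith [sq_nonneg (t - 1)]

theorem norm_div_norm_sq_add_one_smul_le {E : Type*} [SeminormedAddCommGroup E] [NormedSpace ℝ E]
    {c : ℝ} (hc : 0 ≤ c) (v : E) : ‖(c / (‖v‖ ^ 2 + 1)) • v‖ ≤ c / 2 := by
  rw [norm_smul, Real.norm_of_nonneg (by positivity)]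
  calc c / (‖v‖ ^ 2 + 1) * ‖v‖ = c * (‖v‖ / (‖v‖ ^ 2 + 1)) := by ring
    _ ≤ c * (1 / 2) := mul_le_mul_of_nonneg_left (div_sq_add_one_le_half _) hc
    _ = c / 2 := by ring

theorem norm_le_norm_zero_add_of_norm_sub_le_geometric {E : Type*} [SeminormedAddCommGroup E]
    {u : ℕ → E} {C r : ℝ} (hr0 : 0 ≤ r) (hr1 : r < 1)
    (hu : ∀ k, ‖u (k + 1) - u k‖ ≤ C * r ^ k) (k : ℕ) :
    ‖u k‖ ≤ ‖u 0‖ + C / (1 - r) := by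
  have hC : 0 ≤ C := (norm_nonneg _).trans (by simpa using hu 0)
  have hdrift : ‖u k - u 0‖ ≤ ∑ i ∈ Finset.range k, C * r ^ i := by
    rw [← dist_eq_norm, dist_comm]
    exact dist_le_range_sum_of_dist_le k fun {i} _ => by
      rw [dist_comm, dist_eq_norm]; exact hu i
  have hgeom : ∑ i ∈ Finset.range k, r ^ i ≤ 1 / (1 - r) := by
    have := geom_sum_Ico_le_of_lt_one (m := 0) (n := k) hr0 hr1
    rwa [pow_zero, ← Finset.range_eq_Ico] at this
  calc ‖u k‖ ≤ ‖u 0‖ + ‖u k - u 0‖ := norm_le_norm_add_norm_sub' _ _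
    _ ≤ ‖u 0‖ + C * (1 / (1 - r)) := by
      rw [← Finset.mul_sum] at hdrift
      gcongr
      exact hdrift.trans (mul_le_mul_of_nonneg_left hgeom hC)
    _ = ‖u 0‖ + C / (1 - r) := by ring

theorem stmt1 (m : ℕ) (ρ r δ0 : ℝ) (hρ : 0 < ρ)
    (hr : r ∈ Set.Ioo (0:ℝ) 1) (hδ0 : δ0 ∈ Set.Ioc (0:ℝ) 1)
    (lam μ : ℕ → EuclideanSpace ℝ (Fin m))
    (δ : ℕ → ℝ) (hδ : ∀ k, δ k = r ^ k * δ0)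
    (γ : ℕ → ℝ) (hγ : ∀ k, γ k = ρ * δ k / (‖lam k - μ k‖ ^ 2 + 1))
    (hμ : ∀ k, μ (k + 1) = μ k + (γ k / ρ) • (lam k - μ k)) :
    ∀ k, ‖μ k‖ ≤ ‖μ 0‖ + (1 / 2) * (δ0 / (1 - r)) := by
  have hstep : ∀ k, ‖μ (k + 1) - μ k‖ ≤ δ0 / 2 * r ^ k := by
    intro k
    have hγρ : γ k / ρ = δ k / (‖lam k - μ k‖ ^ 2 + 1) := by
      rw [hγ]; field_simp
    have hδk : 0 ≤ δ k := by rw [hδ]; exact mul_nonneg (pow_nonneg hr.1.le k) hδ0.1.le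
    calc ‖μ (k + 1) - μ k‖ ≤ δ k / 2 := by
          rw [hμ, add_sub_cancel_left, hγρ]
          exact norm_div_norm_sq_add_one_smul_le hδk _
      _ = δ0 / 2 * r ^ k := by rw [hδ]; ring
  intro k
  calc ‖μ k‖ ≤ ‖μ 0‖ + δ0 / 2 / (1 - r) :=
        norm_le_norm_zero_add_of_norm_sub_le_geometric hr.1.le hr.2 hstep k
    _ = ‖μ 0‖ + (1 / 2) * (δ0 / (1 - r)) := by ring
end

section
/- Suppose λ_j = μ_j + ρ c(x_j), c is L_c-Lipschitz, μ_{k+1} follows the μ-update with parameter δ_k ∈ (0,1], and γ_k/ρ ∈ (0,1]. Then the dual ascent increase of the reduced Lagrangian satisfies ℓ(x_{k+1}, λ_{k+1}, μ_{k+1}) − ℓ(x_{k+1}, λ_k, μ_k) ≤ ρ L_c² ‖x_{k+1} − x_k‖² + 2δ_k/ρ. -/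
/-!
Write `a = c xₖ`, `b = c xₖ₊₁`, so that `λₖ - μₖ = ρ a`, `λₖ₊₁ - μₖ₊₁ = ρ b` and
`λₖ₊₁ - λₖ = γₖ a + ρ (b - a)`. The increase of `ℓ` then equals `γₖ ⟪a, b⟫ + ρ/2 ‖b - a‖²`
exactly. Splitting `⟪a, b⟫ = ‖a‖² + ⟪a, b - a⟫` and using Young's inequality, everything is
controlled by `ρ ‖b - a‖² ≤ ρ L_c² ‖xₖ₊₁ - xₖ‖²` and the step-size bounds `γₖ ≤ ρ`, `γₖ ρ ‖a‖² ≤ δₖ`.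
-/

open RealInnerProductSpace

section StepSize

variable {ρ δ γ s : ℝ}

lemma step_div_mul_le (hρ : 0 < ρ) (hδ : 0 ≤ δ) (hs : 0 ≤ s) (hγ : γ = ρ * δ / (s + 1)) :
    γ / ρ * s ≤ δ := by
  rw [hγ, mul_div_assoc, mul_div_cancel_left₀ _ hρ.ne', div_mul_eq_mul_div,
    div_le_iff₀ (by positivity)]
  nlinarith

lemma step_le (hρ : 0 ≤ ρ) (hδ : δ ≤ 1) (hs : 0 ≤ s) (hγ : γ = ρ * δ / (s + 1)) : γ ≤ ρ := by
  rw [hγ, div_le_iff₀ (by positivity)]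
  nlinarith

end StepSize

section DualStep

variable {F : Type*} [NormedAddCommGroup F] [InnerProductSpace ℝ F]

lemma dual_step_increase_eq {ρ γ : ℝ} (hρ : ρ ≠ 0) {a b lam mu lam' mu' : F}
    (hmu : mu' = mu + (γ / ρ) • (lam - mu)) (hlam : lam = mu + ρ • a)
    (hlam' : lam' = mu' + ρ • b) :
    (⟪lam', b⟫ - 1 / (2 * ρ) * ‖lam' - mu'‖ ^ 2) - (⟪lam, b⟫ - 1 / (2 * ρ) * ‖lam - mu‖ ^ 2)
      = γ * ⟪a, b⟫ + ρ / 2 * ‖b - a‖ ^ 2 := by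
  have hdiff : lam - mu = ρ • a := by rw [hlam]; abel
  have hdiff' : lam' - mu' = ρ • b := by rw [hlam']; abel
  have hstep : lam' - lam = γ • a + ρ • (b - a) := by
    rw [hlam', hmu, hdiff, smul_smul, div_mul_cancel₀ _ hρ, hlam]
    module
  have hinner : ⟪lam', b⟫ - ⟪lam, b⟫ = γ * ⟪a, b⟫ + ρ * (‖b‖ ^ 2 - ⟪a, b⟫) := by
    rw [← inner_sub_left, hstep, inner_add_left, real_inner_smul_left, real_inner_smul_left,
      inner_sub_left, real_inner_self_eq_norm_sq]
  rw [hdiff, hdiff', norm_smul, norm_smul, norm_sub_sq_real, real_inner_comm a b]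
  have hρsq : 1 / (2 * ρ) * ρ ^ 2 = ρ / 2 := by field_simp
  simp only [Real.norm_eq_abs, mul_pow, sq_abs]
  linear_combination hinner + (‖a‖ ^ 2 - ‖b‖ ^ 2) * hρsq

lemma mul_inner_le_of_mul_mul_norm_sq_le {ρ γ δ : ℝ} (hρ : 0 < ρ) (hγ : 0 ≤ γ) (hγρ : γ ≤ ρ)
    {a b : F} (hδ : γ * ρ * ‖a‖ ^ 2 ≤ δ) :
    γ * ⟪a, b⟫ ≤ ρ / 2 * ‖b - a‖ ^ 2 + 3 * δ / (2 * ρ) := by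
  have hsplit : γ * ⟪a, b⟫ = γ * ‖a‖ ^ 2 + γ * ⟪a, b - a⟫ := by
    rw [inner_sub_right, real_inner_self_eq_norm_sq]; ring
  have hcs : γ * ⟪a, b - a⟫ ≤ γ * ‖a‖ * ‖b - a‖ := by
    rw [mul_assoc]; exact mul_le_mul_of_nonneg_left (real_inner_le_norm a (b - a)) hγ
  -- Young's inequality with weight `ρ`
  have hyoung : γ * ‖a‖ * ‖b - a‖ ≤ (γ * ‖a‖) ^ 2 / (2 * ρ) + ρ / 2 * ‖b - a‖ ^ 2 := by
    rw [div_add' _ _ _ (by positivity), le_div_iff₀ (by positivity)]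
    nlinarith [sq_nonneg (γ * ‖a‖ - ρ * ‖b - a‖)]
  have hsq : (γ * ‖a‖) ^ 2 ≤ δ := by
    calc (γ * ‖a‖) ^ 2 = γ * (γ * ‖a‖ ^ 2) := by ring
      _ ≤ ρ * (γ * ‖a‖ ^ 2) := by gcongr
      _ = γ * ρ * ‖a‖ ^ 2 := by ring
      _ ≤ δ := hδ
  have hnorm : γ * ‖a‖ ^ 2 ≤ δ / ρ := by
    rw [le_div_iff₀ hρ]; linarith
  have hhalf : (γ * ‖a‖) ^ 2 / (2 * ρ) ≤ δ / (2 * ρ) := by gcongr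
  have h3 : 3 * δ / (2 * ρ) = δ / ρ + δ / (2 * ρ) := by field_simp; ring
  linarith

end DualStep

theorem stmt8_general (n m : ℕ) (ρ Lc δk : ℝ) (hρ : 0 < ρ)
    (hδk : δk ∈ Set.Ioc (0:ℝ) 1)
    (f : EuclideanSpace ℝ (Fin n) → ℝ)
    (c : EuclideanSpace ℝ (Fin n) → EuclideanSpace ℝ (Fin m))
    (hLipc : ∀ x y, ‖c x - c y‖ ≤ Lc * ‖x - y‖)
    (l : EuclideanSpace ℝ (Fin n) → EuclideanSpace ℝ (Fin m) →
      EuclideanSpace ℝ (Fin m) → ℝ)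
    (hl : ∀ x lam mu, l x lam mu = f x + ⟪lam, c x⟫ - (1 / (2 * ρ)) * ‖lam - mu‖ ^ 2)
    (xk xk1 : EuclideanSpace ℝ (Fin n))
    (lamk muk lamk1 muk1 : EuclideanSpace ℝ (Fin m))
    (γk : ℝ) (hγk : γk = ρ * δk / (‖lamk - muk‖ ^ 2 + 1))
    (hmu : muk1 = muk + (γk / ρ) • (lamk - muk))
    (hlamk : lamk = muk + ρ • c xk)
    (hlamk1 : lamk1 = muk1 + ρ • c xk1) :
    l xk1 lamk1 muk1 - l xk1 lamk muk ≤ ρ * Lc ^ 2 * ‖xk1 - xk‖ ^ 2 + 2 * δk / ρ := by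
  obtain ⟨hδ0, hδ1⟩ := hδk
  have hγ0 : 0 ≤ γk := by rw [hγk]; positivity
  have hdecrease : γk * ρ * ‖c xk‖ ^ 2 ≤ δk := by
    have h := step_div_mul_le hρ hδ0.le (sq_nonneg _) hγk
    rw [hlamk, add_sub_cancel_left, norm_smul, Real.norm_of_nonneg hρ.le] at h
    calc γk * ρ * ‖c xk‖ ^ 2 = γk / ρ * (ρ * ‖c xk‖) ^ 2 := by field_simp
      _ ≤ δk := h
  have hinner := mul_inner_le_of_mul_mul_norm_sq_le (b := c xk1) hρ hγ0
    (step_le hρ.le hδ1 (sq_nonneg _) hγk) hdecrease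
  have hLip : ‖c xk1 - c xk‖ ^ 2 ≤ Lc ^ 2 * ‖xk1 - xk‖ ^ 2 := by
    rw [← mul_pow]; exact pow_le_pow_left₀ (norm_nonneg _) (hLipc xk1 xk) 2
  have hincrease := dual_step_increase_eq hρ.ne' hmu hlamk hlamk1
  have hδρ : 3 * δk / (2 * ρ) ≤ 2 * δk / ρ := by
    rw [div_le_div_iff₀ (by positivity) hρ]; nlinarith
  have hρLip := mul_le_mul_of_nonneg_left hLip hρ.le
  rw [hl, hl]
  linarith

theorem stmt8 (n m : ℕ) (ρ Lc δk : ℝ) (hρ : 0 < ρ) (hLc : 0 ≤ Lc)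
    (hδk : δk ∈ Set.Ioc (0:ℝ) 1)
    (f : EuclideanSpace ℝ (Fin n) → ℝ)
    (c : EuclideanSpace ℝ (Fin n) → EuclideanSpace ℝ (Fin m))
    (hLipc : ∀ x y, ‖c x - c y‖ ≤ Lc * ‖x - y‖)
    (l : EuclideanSpace ℝ (Fin n) → EuclideanSpace ℝ (Fin m) →
      EuclideanSpace ℝ (Fin m) → ℝ)
    (hl : ∀ x lam mu, l x lam mu = f x + ⟪lam, c x⟫ - (1 / (2 * ρ)) * ‖lam - mu‖ ^ 2)
    (xk xk1 : EuclideanSpace ℝ (Fin n))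
    (lamk muk lamk1 muk1 : EuclideanSpace ℝ (Fin m))
    (γk : ℝ) (hγk : γk = ρ * δk / (‖lamk - muk‖ ^ 2 + 1))
    (hmu : muk1 = muk + (γk / ρ) • (lamk - muk))
    (hlamk : lamk = muk + ρ • c xk)
    (hlamk1 : lamk1 = muk1 + ρ • c xk1) :
    l xk1 lamk1 muk1 - l xk1 lamk muk ≤ ρ * Lc ^ 2 * ‖xk1 - xk‖ ^ 2 + 2 * δk / ρ :=
  stmt8_general n m ρ Lc δk hρ hδk f c hLipc l hl xk xk1 lamk muk lamk1 muk1 γk hγk hmu hlamk hlamk1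
end

section
/- Let g: ℝ^n → ℝ be differentiable with L-Lipschitz gradient on a closed convex set X, and let x⁺ be the minimizer over X of the proximal-linearized model x ↦ g(x₀) + ⟨∇g(x₀), x − x₀⟩ + (η/2)‖x − x₀‖² with η > L and x₀ ∈ X. Then g(x⁺) ≤ g(x₀) − ((η − L)/2)‖x⁺ − x₀‖². -/
open RealInnerProductSpace Set

/- The descent lemma: along the segment from `x` to `y` the derivative of `g` exceeds its value
at `x` by at most `L t ‖y - x‖²`, so `g y` lies below the quadratic upper model at `x`. Taking
`x = x₀`, `y = x⁺` and comparing the model at `x⁺` with its value at `x₀` gives the claim. -/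

theorem le_add_deriv_add_half_of_deriv_le {f f' : ℝ → ℝ} {c : ℝ}
    (hf : ∀ t ∈ Icc (0 : ℝ) 1, HasDerivAt f (f' t) t)
    (hf' : ∀ t ∈ Ico (0 : ℝ) 1, f' t ≤ f' 0 + c * t) :
    f 1 ≤ f 0 + f' 0 + c / 2 := by
  set B : ℝ → ℝ := fun t => f 0 + t * f' 0 + c / 2 * t ^ 2
  have hB : ∀ t, HasDerivAt B (f' 0 + c * t) t := fun t =>
    ((((hasDerivAt_id' t).mul_const (f' 0)).const_add (f 0)).add
      ((hasDerivAt_pow 2 t).const_mul (c / 2))).congr_deriv (by ring)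
  have hle := image_le_of_deriv_right_le_deriv_boundary
    (fun t ht => (hf t ht).continuousAt.continuousWithinAt)
    (fun t ht => (hf t (Ico_subset_Icc_self ht)).hasDerivWithinAt)
    (B := B) (le_of_eq (by simp [B]))
    (fun t _ => (hB t).continuousAt.continuousWithinAt)
    (fun t _ => (hB t).hasDerivWithinAt) hf' (right_mem_Icc.2 zero_le_one)
  simpa [B] using hle

theorem Convex.le_add_inner_add_sq_of_lipschitz_gradient {E : Type*} [NormedAddCommGroup E]
    [InnerProductSpace ℝ E] [CompleteSpace E] {X : Set E} (hX : Convex ℝ X) {g : E → ℝ}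
    {g' : E → E} (hg : ∀ z ∈ X, HasGradientAt g (g' z) z) {L : ℝ}
    (hLip : ∀ x ∈ X, ∀ y ∈ X, ‖g' x - g' y‖ ≤ L * ‖x - y‖) {x y : E} (hx : x ∈ X) (hy : y ∈ X) :
    g y ≤ g x + ⟪g' x, y - x⟫ + L / 2 * ‖y - x‖ ^ 2 := by
  set v := y - x
  have hmem : ∀ t ∈ Icc (0 : ℝ) 1, x + t • v ∈ X := fun t ht => by
    simpa [v, AffineMap.lineMap_apply_module', add_comm] using
      hX.lineMap_mem hx hy ⟨ht.1, ht.2⟩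
  have hderiv : ∀ t ∈ Icc (0 : ℝ) 1,
      HasDerivAt (fun s : ℝ => g (x + s • v)) ⟪g' (x + t • v), v⟫ t := fun t ht => by
    have hline : HasDerivAt (fun s : ℝ => x + s • v) v t := by
      simpa using ((hasDerivAt_id t).smul_const v).const_add x
    exact (hg _ (hmem t ht)).hasFDerivAt.comp_hasDerivAt t hline
  have hslope : ∀ t ∈ Ico (0 : ℝ) 1,
      ⟪g' (x + t • v), v⟫ ≤ ⟪g' (x + (0 : ℝ) • v), v⟫ + L * ‖v‖ ^ 2 * t := fun t ht => by
    have hIcc : t ∈ Icc (0 : ℝ) 1 := Ico_subset_Icc_self ht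
    calc ⟪g' (x + t • v), v⟫ = ⟪g' x, v⟫ + ⟪g' (x + t • v) - g' x, v⟫ := by
          rw [inner_sub_left]; ring
      _ ≤ ⟪g' x, v⟫ + ‖g' (x + t • v) - g' x‖ * ‖v‖ := by
          gcongr; exact real_inner_le_norm _ _
      _ ≤ ⟪g' x, v⟫ + L * ‖x + t • v - x‖ * ‖v‖ := by
          gcongr; exact hLip _ (hmem t hIcc) _ hx
      _ = ⟪g' (x + (0 : ℝ) • v), v⟫ + L * ‖v‖ ^ 2 * t := by
          rw [add_sub_cancel_left, norm_smul, Real.norm_of_nonneg ht.1, zero_smul, add_zero]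
          ring
  simpa [v, div_mul_eq_mul_div] using le_add_deriv_add_half_of_deriv_le hderiv hslope

theorem stmt9_general (n : ℕ) (X : Set (EuclideanSpace ℝ (Fin n)))
    (hXconv : Convex ℝ X)
    (g : EuclideanSpace ℝ (Fin n) → ℝ)
    (g' : EuclideanSpace ℝ (Fin n) → EuclideanSpace ℝ (Fin n))
    (hg : ∀ x, HasGradientAt g (g' x) x)
    (L η : ℝ)
    (hLip : ∀ x ∈ X, ∀ y ∈ X, ‖g' x - g' y‖ ≤ L * ‖x - y‖)
    (x0 xp : EuclideanSpace ℝ (Fin n)) (hx0 : x0 ∈ X) (hxp : xp ∈ X)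
    (hmin : ∀ y ∈ X, ⟪g' x0, xp - x0⟫ + (η / 2) * ‖xp - x0‖ ^ 2 ≤
      ⟪g' x0, y - x0⟫ + (η / 2) * ‖y - x0‖ ^ 2) :
    g xp ≤ g x0 - ((η - L) / 2) * ‖xp - x0‖ ^ 2 := by
  have hdescent := hXconv.le_add_inner_add_sq_of_lipschitz_gradient (fun z _ => hg z) hLip hx0 hxp
  have hmodel : ⟪g' x0, xp - x0⟫ + (η / 2) * ‖xp - x0‖ ^ 2 ≤ 0 := by
    simpa using hmin x0 hx0
  linarith

theorem stmt9 (n : ℕ) (X : Set (EuclideanSpace ℝ (Fin n)))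
    (hXne : X.Nonempty) (hXc : IsClosed X) (hXconv : Convex ℝ X)
    (g : EuclideanSpace ℝ (Fin n) → ℝ)
    (g' : EuclideanSpace ℝ (Fin n) → EuclideanSpace ℝ (Fin n))
    (hg : ∀ x, HasGradientAt g (g' x) x)
    (L η : ℝ) (hL : 0 ≤ L)
    (hLip : ∀ x ∈ X, ∀ y ∈ X, ‖g' x - g' y‖ ≤ L * ‖x - y‖)
    (hη : L < η)
    (x0 xp : EuclideanSpace ℝ (Fin n)) (hx0 : x0 ∈ X) (hxp : xp ∈ X)
    (hmin : ∀ y ∈ X, ⟪g' x0, xp - x0⟫ + (η / 2) * ‖xp - x0‖ ^ 2 ≤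
      ⟪g' x0, y - x0⟫ + (η / 2) * ‖y - x0‖ ^ 2) :
    g xp ≤ g x0 - ((η - L) / 2) * ‖xp - x0‖ ^ 2 :=
  stmt9_general n X hXconv g g' hg L η hLip x0 xp hx0 hxp hmin
end

section
/- Combined sufficient decrease: under L_p-Lipschitz gradient of x ↦ ℓ(x,λ,μ) on X, L_c-Lipschitz c, the Algorithm-1 updates, and η > L_p + 2ρL_c², the merit values satisfy ℓ(x_{k+1}, λ_{k+1}, μ_{k+1}) ≤ ℓ(x_k, λ_k, μ_k) − ((η − L_p − 2ρL_c²)/2)‖x_{k+1} − x_k‖² + 2δ_k/ρ. -/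
/-!
The primal step is a projected gradient step, so comparing it with `xk` in its defining
minimisation and applying the descent lemma for the `Lp`-Lipschitz gradient gives the decrease
`(η - Lp) / 2 * ‖xk1 - xk‖ ^ 2`. The dual step changes the merit value at `xk1` by exactly
`γk * ⟪c xk, c xk1⟫ + ρ / 2 * ‖c xk1 - c xk‖ ^ 2`. The safeguarded step size keeps
`γk * ‖c xk‖ ^ 2 ≤ δk / ρ` and `(γk * ‖c xk‖) ^ 2 ≤ δk`, so Young's inequality bounds this change
by `ρ * ‖c xk1 - c xk‖ ^ 2 + 2 * δk / ρ`, and `c` being `Lc`-Lipschitz finishes.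
-/

open RealInnerProductSpace Set

section Descent

variable {E : Type*} [NormedAddCommGroup E] [InnerProductSpace ℝ E] [CompleteSpace E]

theorem Convex.le_add_inner_add_of_gradient_lipschitz {s : Set E} (hs : Convex ℝ s)
    {f : E → ℝ} {g : E → E} {L : ℝ} (hf : ∀ x ∈ s, HasGradientAt f (g x) x)
    (hg : ∀ x ∈ s, ∀ y ∈ s, ‖g x - g y‖ ≤ L * ‖x - y‖) {x y : E} (hx : x ∈ s) (hy : y ∈ s) :
    f y ≤ f x + ⟪g x, y - x⟫ + L / 2 * ‖y - x‖ ^ 2 := by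
  set d := y - x
  have hmem : ∀ t ∈ Icc (0 : ℝ) 1, x + t • d ∈ s := fun t ht => hs.add_smul_sub_mem hx hy ht
  -- the gap between the quadratic upper model and `f` along the segment; `φ 1 ≤ φ 0` is the claim
  set φ : ℝ → ℝ := fun t => f (x + t • d) - t * ⟪g x, d⟫ - L / 2 * t ^ 2 * ‖d‖ ^ 2
  have hφ : ∀ t ∈ Icc (0 : ℝ) 1,
      HasDerivAt φ (⟪g (x + t • d) - g x, d⟫ - L * t * ‖d‖ ^ 2) t := by
    intro t ht
    have hline : HasDerivAt (fun t : ℝ => x + t • d) d t := by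
      simpa using ((hasDerivAt_id t).smul_const d).const_add x
    have hfline := (hf _ (hmem t ht)).hasFDerivAt.comp_hasDerivAt t hline
    refine ((hfline.sub ((hasDerivAt_id t).mul_const ⟪g x, d⟫)).sub
      (((hasDerivAt_pow 2 t).const_mul (L / 2)).mul_const (‖d‖ ^ 2))).congr_deriv ?_
    rw [InnerProductSpace.toDual_apply_apply, inner_sub_left]
    ring
  have hφ_nonpos : ∀ t ∈ Icc (0 : ℝ) 1, ⟪g (x + t • d) - g x, d⟫ - L * t * ‖d‖ ^ 2 ≤ 0 := by
    intro t ht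
    have hgt : ‖g (x + t • d) - g x‖ ≤ L * t * ‖d‖ := by
      simpa [norm_smul, abs_of_nonneg ht.1, mul_assoc] using hg _ (hmem t ht) x hx
    nlinarith [real_inner_le_norm (g (x + t • d) - g x) d,
      mul_le_mul_of_nonneg_right hgt (norm_nonneg d)]
  have hanti : AntitoneOn φ (Icc 0 1) :=
    antitoneOn_of_hasDerivWithinAt_nonpos (convex_Icc 0 1)
      (fun t ht => (hφ t ht).continuousAt.continuousWithinAt)
      (fun t ht => (hφ t (interior_subset ht)).hasDerivWithinAt)
      (fun t ht => hφ_nonpos t (interior_subset ht))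
  have h01 := hanti (left_mem_Icc.2 zero_le_one) (right_mem_Icc.2 zero_le_one) zero_le_one
  simp only [φ, d, zero_smul, add_zero, one_smul, add_sub_cancel, zero_mul, sub_zero, one_mul,
    ne_eq, OfNat.ofNat_ne_zero, not_false_eq_true, zero_pow, one_pow, mul_one] at h01
  linarith

end Descent

theorem dual_stepsize_bounds {ρ δ a : ℝ} (hρ : 0 < ρ) (hδ : δ ∈ Icc 0 1) :
    ρ * δ / ((ρ * a) ^ 2 + 1) * a ^ 2 ≤ δ / ρ ∧ (ρ * δ / ((ρ * a) ^ 2 + 1) * a) ^ 2 ≤ δ := by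
  set γ := ρ * δ / ((ρ * a) ^ 2 + 1)
  have hden : 0 < (ρ * a) ^ 2 + 1 := by positivity
  have hγ_nonneg : 0 ≤ γ := div_nonneg (mul_nonneg hρ.le hδ.1) hden.le
  have hγ_le : γ ≤ ρ * δ := div_le_self (mul_nonneg hρ.le hδ.1) (by nlinarith)
  have hγa : γ * a ^ 2 ≤ δ / ρ := by
    rw [le_div_iff₀ hρ, div_mul_eq_mul_div, div_mul_eq_mul_div, div_le_iff₀ hden]
    nlinarith [mul_nonneg hρ.le hδ.1]
  refine ⟨hγa, ?_⟩
  calc (γ * a) ^ 2 = γ * (γ * a ^ 2) := by ring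
    _ ≤ ρ * δ * (δ / ρ) := mul_le_mul hγ_le hγa (by positivity) (mul_nonneg hρ.le hδ.1)
    _ = δ * δ := by field_simp
    _ ≤ δ := mul_le_of_le_one_right hδ.1 hδ.2

section Dual

variable {F : Type*} [NormedAddCommGroup F] [InnerProductSpace ℝ F]

theorem mul_inner_le_sq_div_add_mul_sq {ρ : ℝ} (hρ : 0 < ρ) (γ : ℝ) (u v : F) :
    γ * ⟪u, v⟫ ≤ (γ * ‖u‖) ^ 2 / (2 * ρ) + ρ / 2 * ‖v‖ ^ 2 := by
  have h : 0 ≤ ‖γ • u - ρ • v‖ ^ 2 := sq_nonneg _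
  rw [norm_sub_sq_real, norm_smul, norm_smul, real_inner_smul_left, real_inner_smul_right,
    Real.norm_eq_abs, Real.norm_eq_abs, mul_pow, mul_pow, sq_abs, sq_abs] at h
  rw [div_add' _ _ _ (by positivity), le_div_iff₀ (by positivity)]
  nlinarith

theorem dual_update_increase_le {ρ δ γ : ℝ} (hρ : 0 < ρ) (hδ : δ ∈ Icc 0 1)
    {c₀ c₁ lam mu lam' mu' : F} (hlam : lam = mu + ρ • c₀)
    (hγ : γ = ρ * δ / (‖lam - mu‖ ^ 2 + 1)) (hmu' : mu' = mu + (γ / ρ) • (lam - mu))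
    (hlam' : lam' = mu' + ρ • c₁) :
    ⟪lam', c₁⟫ - 1 / (2 * ρ) * ‖lam' - mu'‖ ^ 2 ≤
      ⟪lam, c₁⟫ - 1 / (2 * ρ) * ‖lam - mu‖ ^ 2 + ρ * ‖c₁ - c₀‖ ^ 2 + 2 * δ / ρ := by
  have hdiff : lam - mu = ρ • c₀ := by rw [hlam]; abel
  have hdiff' : lam' - mu' = ρ • c₁ := by rw [hlam']; abel
  have hmu'' : mu' = mu + γ • c₀ := by
    rw [hmu', hdiff, smul_smul, div_mul_cancel₀ _ hρ.ne']
  have hnorm : ∀ c : F, ‖ρ • c‖ ^ 2 = (ρ * ‖c‖) ^ 2 := fun c => by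
    rw [norm_smul, Real.norm_eq_abs, mul_pow, sq_abs, mul_pow]
  have hincrease : ⟪lam', c₁⟫ - 1 / (2 * ρ) * ‖lam' - mu'‖ ^ 2 -
      (⟪lam, c₁⟫ - 1 / (2 * ρ) * ‖lam - mu‖ ^ 2) =
        γ * ‖c₀‖ ^ 2 + γ * ⟪c₀, c₁ - c₀⟫ + ρ / 2 * ‖c₁ - c₀‖ ^ 2 := by
    rw [hdiff, hdiff', hnorm, hnorm, hlam', hmu'', hlam, norm_sub_sq_real]
    simp only [inner_add_left, inner_sub_right, real_inner_smul_left, real_inner_self_eq_norm_sq,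
      real_inner_comm c₀]
    field_simp
    ring
  rw [hdiff, hnorm] at hγ
  obtain ⟨hγc, hγc_sq⟩ := dual_stepsize_bounds (a := ‖c₀‖) hρ hδ
  rw [← hγ] at hγc hγc_sq
  have hyoung := mul_inner_le_sq_div_add_mul_sq hρ γ c₀ (c₁ - c₀)
  have : (γ * ‖c₀‖) ^ 2 / (2 * ρ) ≤ δ / (2 * ρ) := by gcongr
  have : δ / (2 * ρ) ≤ δ / ρ := div_le_div_of_nonneg_left hδ.1 hρ (by linarith)
  have : 2 * δ / ρ = δ / ρ + δ / ρ := by ring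
  linarith

end Dual

theorem stmt17_general (n m : ℕ)
    (X : Set (EuclideanSpace ℝ (Fin n)))
    (hXconv : Convex ℝ X)
    (f : EuclideanSpace ℝ (Fin n) → ℝ)
    (c : EuclideanSpace ℝ (Fin n) → EuclideanSpace ℝ (Fin m))
    (ρ Lp Lc η δk : ℝ) (hρ : 0 < ρ)
    (hδk : δk ∈ Set.Ioc (0:ℝ) 1)
    (l : EuclideanSpace ℝ (Fin n) → EuclideanSpace ℝ (Fin m) →
      EuclideanSpace ℝ (Fin m) → ℝ)
    (hl : ∀ x lam mu, l x lam mu = f x + ⟪lam, c x⟫ - (1 / (2 * ρ)) * ‖lam - mu‖ ^ 2)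
    (lamk muk : EuclideanSpace ℝ (Fin m)) (xk xk1 : EuclideanSpace ℝ (Fin n))
    (gx : EuclideanSpace ℝ (Fin n) → EuclideanSpace ℝ (Fin n))
    (hgrad : ∀ x, HasGradientAt (fun y => l y lamk muk) (gx x) x)
    (hLipg : ∀ x ∈ X, ∀ y ∈ X, ‖gx x - gx y‖ ≤ Lp * ‖x - y‖)
    (hLipc : ∀ x y, ‖c x - c y‖ ≤ Lc * ‖x - y‖)
    (hxk : xk ∈ X) (hxk1 : xk1 ∈ X)
    (hmin : ∀ y ∈ X, ⟪gx xk, xk1 - xk⟫ + (η / 2) * ‖xk1 - xk‖ ^ 2 ≤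
      ⟪gx xk, y - xk⟫ + (η / 2) * ‖y - xk‖ ^ 2)
    (γk : ℝ) (hγk : γk = ρ * δk / (‖lamk - muk‖ ^ 2 + 1))
    (muk1 lamk1 : EuclideanSpace ℝ (Fin m))
    (hmu : muk1 = muk + (γk / ρ) • (lamk - muk))
    (hlamk1 : lamk1 = muk1 + ρ • c xk1)
    (hlamk : lamk = muk + ρ • c xk) :
    l xk1 lamk1 muk1 ≤
      l xk lamk muk - ((η - Lp - 2 * ρ * Lc ^ 2) / 2) * ‖xk1 - xk‖ ^ 2 + 2 * δk / ρ := by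
  have hprimal : l xk1 lamk muk ≤ l xk lamk muk - (η - Lp) / 2 * ‖xk1 - xk‖ ^ 2 := by
    have hstep := hmin xk hxk
    rw [sub_self, inner_zero_right, norm_zero] at hstep
    have := hXconv.le_add_inner_add_of_gradient_lipschitz (fun x _ => hgrad x) hLipg hxk hxk1
    linarith
  have hdual : l xk1 lamk1 muk1 ≤ l xk1 lamk muk + ρ * Lc ^ 2 * ‖xk1 - xk‖ ^ 2 + 2 * δk / ρ := by
    have hc : ‖c xk1 - c xk‖ ^ 2 ≤ Lc ^ 2 * ‖xk1 - xk‖ ^ 2 := by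
      rw [← mul_pow]; exact pow_le_pow_left₀ (norm_nonneg _) (hLipc xk1 xk) 2
    have := dual_update_increase_le hρ (Ioc_subset_Icc_self hδk) hlamk hγk hmu hlamk1
    have := mul_le_mul_of_nonneg_left hc hρ.le
    rw [hl, hl]
    linarith
  linarith

theorem stmt17 (n m : ℕ)
    (X : Set (EuclideanSpace ℝ (Fin n)))
    (hXne : X.Nonempty) (hXc : IsClosed X) (hXconv : Convex ℝ X)
    (f : EuclideanSpace ℝ (Fin n) → ℝ)
    (c : EuclideanSpace ℝ (Fin n) → EuclideanSpace ℝ (Fin m))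
    (ρ Lp Lc η δk : ℝ) (hρ : 0 < ρ) (hLp : 0 ≤ Lp) (hLc : 0 ≤ Lc)
    (hδk : δk ∈ Set.Ioc (0:ℝ) 1)
    (l : EuclideanSpace ℝ (Fin n) → EuclideanSpace ℝ (Fin m) →
      EuclideanSpace ℝ (Fin m) → ℝ)
    (hl : ∀ x lam mu, l x lam mu = f x + ⟪lam, c x⟫ - (1 / (2 * ρ)) * ‖lam - mu‖ ^ 2)
    (lamk muk : EuclideanSpace ℝ (Fin m)) (xk xk1 : EuclideanSpace ℝ (Fin n))
    (gx : EuclideanSpace ℝ (Fin n) → EuclideanSpace ℝ (Fin n))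
    (hgrad : ∀ x, HasGradientAt (fun y => l y lamk muk) (gx x) x)
    (hLipg : ∀ x ∈ X, ∀ y ∈ X, ‖gx x - gx y‖ ≤ Lp * ‖x - y‖)
    (hLipc : ∀ x y, ‖c x - c y‖ ≤ Lc * ‖x - y‖)
    (hxk : xk ∈ X) (hxk1 : xk1 ∈ X)
    (hmin : ∀ y ∈ X, ⟪gx xk, xk1 - xk⟫ + (η / 2) * ‖xk1 - xk‖ ^ 2 ≤
      ⟪gx xk, y - xk⟫ + (η / 2) * ‖y - xk‖ ^ 2)
    (γk : ℝ) (hγk : γk = ρ * δk / (‖lamk - muk‖ ^ 2 + 1))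
    (muk1 lamk1 : EuclideanSpace ℝ (Fin m))
    (hmu : muk1 = muk + (γk / ρ) • (lamk - muk))
    (hlamk1 : lamk1 = muk1 + ρ • c xk1)
    (hlamk : lamk = muk + ρ • c xk)
    (hη : Lp + 2 * ρ * Lc ^ 2 < η) :
    l xk1 lamk1 muk1 ≤
      l xk lamk muk - ((η - Lp - 2 * ρ * Lc ^ 2) / 2) * ‖xk1 - xk‖ ^ 2 + 2 * δk / ρ :=
  stmt17_general n m X hXconv f c ρ Lp Lc η δk hρ hδk l hl lamk muk xk xk1 gx hgrad hLipg hLipc hxk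
    hxk1 hmin γk hγk muk1 lamk1 hmu hlamk1 hlamk
end

section
/- Summability transfer for the algorithm's dual increments: if μ_{k+1} = μ_k + (γ_k/ρ)(λ_k − μ_k) with γ_k = ρδ_k/(‖λ_k−μ_k‖²+1), δ_k = r^kδ_0 (r ∈ (0,1), δ_0 ∈ (0,1]), λ_j = μ_j + ρc(x_j) with c L_c-Lipschitz, and Σ‖x_{k+1}−x_k‖² < ∞, then Σ‖μ_{k+1}−μ_k‖² < ∞ and Σ‖λ_{k+1}−λ_k‖² < ∞. -/
open Filter Topology

/-! The step `μ_{k+1} - μ_k = (δ_k / (‖v_k‖² + 1)) • v_k` has norm at most `|δ_k|` whatever `v_k` is,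
and `δ_k² = (r²)^k δ_0²` is summable. For the multipliers,
`λ_{k+1} - λ_k = (μ_{k+1} - μ_k) + ρ • (c x_{k+1} - c x_k)`, and square-summability of increments
is preserved by sums, scalar multiples and Lipschitz maps. -/

section

variable {ι E F : Type*} [SeminormedAddCommGroup E] [SeminormedAddCommGroup F]

lemma Summable.sq_norm_add {f g : ι → E} (hf : Summable fun k => ‖f k‖ ^ 2)
    (hg : Summable fun k => ‖g k‖ ^ 2) : Summable fun k => ‖f k + g k‖ ^ 2 := by
  refine .of_nonneg_of_le (fun k => by positivity) (fun k => ?_) ((hf.add hg).mul_left 2)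
  calc ‖f k + g k‖ ^ 2 ≤ (‖f k‖ + ‖g k‖) ^ 2 := by gcongr; exact norm_add_le _ _
    _ ≤ 2 * (‖f k‖ ^ 2 + ‖g k‖ ^ 2) := add_sq_le

lemma Summable.sq_norm_smul {𝕜 : Type*} [NormedField 𝕜] [NormedSpace 𝕜 E] {f : ι → E} (a : 𝕜)
    (hf : Summable fun k => ‖f k‖ ^ 2) : Summable fun k => ‖a • f k‖ ^ 2 := by
  simpa only [norm_smul, mul_pow] using hf.mul_left (‖a‖ ^ 2)

lemma summable_sq_norm_sub_comp {c : E → F} {L : ℝ} (hc : ∀ x y, ‖c x - c y‖ ≤ L * ‖x - y‖)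
    {x : ℕ → E} (hx : Summable fun k => ‖x (k + 1) - x k‖ ^ 2) :
    Summable fun k => ‖c (x (k + 1)) - c (x k)‖ ^ 2 := by
  refine .of_nonneg_of_le (fun k => by positivity) (fun k => ?_) (hx.mul_left (L ^ 2))
  rw [← mul_pow]
  exact pow_le_pow_left₀ (norm_nonneg _) (hc _ _) 2

lemma norm_div_sq_norm_add_one_smul_le [NormedSpace ℝ E] (t : ℝ) (v : E) :
    ‖(t / (‖v‖ ^ 2 + 1)) • v‖ ≤ |t| := by
  have hpos : 0 < ‖v‖ ^ 2 + 1 := by positivity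
  rw [norm_smul, Real.norm_eq_abs, abs_div, abs_of_pos hpos, div_mul_eq_mul_div,
    div_le_iff₀ hpos]
  have hv : ‖v‖ ≤ ‖v‖ ^ 2 + 1 := by nlinarith [sq_nonneg (‖v‖ - 1)]
  exact mul_le_mul_of_nonneg_left hv (abs_nonneg t)

lemma summable_sq_norm_sub_of_damped_step [NormedSpace ℝ E] {μ v : ℕ → E} {δ : ℕ → ℝ}
    (hδ : Summable fun k => δ k ^ 2)
    (hμ : ∀ k, μ (k + 1) = μ k + (δ k / (‖v k‖ ^ 2 + 1)) • v k) :
    Summable fun k => ‖μ (k + 1) - μ k‖ ^ 2 := by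
  refine .of_nonneg_of_le (fun k => by positivity) (fun k => ?_) hδ
  rw [hμ k, add_sub_cancel_left, ← sq_abs (δ k)]
  exact pow_le_pow_left₀ (norm_nonneg _) (norm_div_sq_norm_add_one_smul_le _ _) 2

end

theorem stmt19_general (n m : ℕ) (ρ r δ0 Lc : ℝ) (hρ : 0 < ρ)
    (hr : r ∈ Set.Ioo (0:ℝ) 1)
    (c : EuclideanSpace ℝ (Fin n) → EuclideanSpace ℝ (Fin m))
    (hLipc : ∀ x y, ‖c x - c y‖ ≤ Lc * ‖x - y‖)
    (x : ℕ → EuclideanSpace ℝ (Fin n))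
    (lam mu : ℕ → EuclideanSpace ℝ (Fin m))
    (δ : ℕ → ℝ) (hδ : ∀ k, δ k = r ^ k * δ0)
    (γ : ℕ → ℝ) (hγ : ∀ k, γ k = ρ * δ k / (‖lam k - mu k‖ ^ 2 + 1))
    (hmu : ∀ k, mu (k + 1) = mu k + (γ k / ρ) • (lam k - mu k))
    (hlam : ∀ k, lam k = mu k + ρ • c (x k))
    (hxsum : Summable (fun k => ‖x (k + 1) - x k‖ ^ 2)) :
    Summable (fun k => ‖mu (k + 1) - mu k‖ ^ 2) ∧
    Summable (fun k => ‖lam (k + 1) - lam k‖ ^ 2) := by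
  have hδsq : Summable fun k => δ k ^ 2 := by
    have hgeom := (summable_geometric_of_lt_one (sq_nonneg r)
      (pow_lt_one₀ hr.1.le hr.2 two_ne_zero)).mul_right (δ0 ^ 2)
    exact hgeom.congr fun k => by rw [hδ]; ring
  have hmu' : ∀ k, mu (k + 1) = mu k + (δ k / (‖lam k - mu k‖ ^ 2 + 1)) • (lam k - mu k) := by
    intro k
    rw [hmu k, hγ k, mul_div_assoc, mul_div_cancel_left₀ _ hρ.ne']
  have hmusum := summable_sq_norm_sub_of_damped_step hδsq hmu'
  have hlam_sub : ∀ k, lam (k + 1) - lam k =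
      (mu (k + 1) - mu k) + ρ • (c (x (k + 1)) - c (x k)) := by
    intro k
    rw [hlam, hlam, smul_sub]
    abel
  refine ⟨hmusum, ?_⟩
  simpa only [hlam_sub] using
    hmusum.sq_norm_add ((summable_sq_norm_sub_comp hLipc hxsum).sq_norm_smul ρ)

theorem stmt19 (n m : ℕ) (ρ r δ0 Lc : ℝ) (hρ : 0 < ρ) (hLc : 0 ≤ Lc)
    (hr : r ∈ Set.Ioo (0:ℝ) 1) (hδ0 : δ0 ∈ Set.Ioc (0:ℝ) 1)
    (c : EuclideanSpace ℝ (Fin n) → EuclideanSpace ℝ (Fin m))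
    (hLipc : ∀ x y, ‖c x - c y‖ ≤ Lc * ‖x - y‖)
    (x : ℕ → EuclideanSpace ℝ (Fin n))
    (lam mu : ℕ → EuclideanSpace ℝ (Fin m))
    (δ : ℕ → ℝ) (hδ : ∀ k, δ k = r ^ k * δ0)
    (γ : ℕ → ℝ) (hγ : ∀ k, γ k = ρ * δ k / (‖lam k - mu k‖ ^ 2 + 1))
    (hmu : ∀ k, mu (k + 1) = mu k + (γ k / ρ) • (lam k - mu k))
    (hlam : ∀ k, lam k = mu k + ρ • c (x k))
    (hxsum : Summable (fun k => ‖x (k + 1) - x k‖ ^ 2)) :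
    Summable (fun k => ‖mu (k + 1) - mu k‖ ^ 2) ∧
    Summable (fun k => ‖lam (k + 1) - lam k‖ ^ 2) :=
  stmt19_general n m ρ r δ0 Lc hρ hr c hLipc x lam mu δ hδ γ hγ hmu hlam hxsum
end
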